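/- Let M be a von Neumann algebra on a Hilbert space H, T ∈ M dominated by a gauge p, and L a Banach limit. Define E_{L,T} : M → M by ⟨E_{L,T}(X)x, y⟩ = L({⟨X T^n x, T^n y⟩ / p(n)^2}_n) for x,y ∈ H. Then E_{L,T} is a completely positive bounded linear map on M. -/

import Mathlib

noncomputable section

/-- A complex sequence is bounded. -/
def IsBoundedSeq (u : ℕ → ℂ) : Prop := ∃ C : ℝ, ∀ n, ‖u n‖ ≤ C

/-- Almost convergence (Lorentz) of a complex sequence: the Cesàro averages
`(1/(n+1)) ∑_{i=k}^{k+n} u i` converge to `c` uniformly in `k`. -/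
def AlmostConvergentC (u : ℕ → ℂ) (c : ℂ) : Prop :=
  ∀ ε : ℝ, 0 < ε → ∃ N : ℕ, ∀ n ≥ N, ∀ k : ℕ,
    ‖(∑ i ∈ Finset.range (n + 1), u (k + i)) / ((n : ℂ) + 1) - c‖ < ε

/-- Almost convergence (Lorentz) of a real sequence. -/
def AlmostConvergentR (u : ℕ → ℝ) (c : ℝ) : Prop :=
  ∀ ε : ℝ, 0 < ε → ∃ N : ℕ, ∀ n ≥ N, ∀ k : ℕ,
    |(∑ i ∈ Finset.range (n + 1), u (k + i)) / ((n : ℝ) + 1) - c| < ε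

/-- A Banach limit: a shift-invariant positive linear functional on `ℓ^∞(ℕ, ℂ)`
with `L(1) = 1 = ‖L‖`. -/
structure BanachLimit where
  toFun : (ℕ → ℂ) → ℂ
  map_add' : ∀ u v : ℕ → ℂ, IsBoundedSeq u → IsBoundedSeq v →
    toFun (u + v) = toFun u + toFun v
  map_smul' : ∀ (a : ℂ) (u : ℕ → ℂ), IsBoundedSeq u → toFun (a • u) = a * toFun u
  norm_le' : ∀ (u : ℕ → ℂ) (C : ℝ), (∀ n, ‖u n‖ ≤ C) → ‖toFun u‖ ≤ C
  map_one' : toFun (fun _ => 1) = 1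
  shift' : ∀ u : ℕ → ℂ, IsBoundedSeq u → toFun (fun n => u (n + 1)) = toFun u
  pos' : ∀ u : ℕ → ℂ, (∀ n, ∃ r : ℝ, 0 ≤ r ∧ u n = (r : ℂ)) →
    ∃ r : ℝ, 0 ≤ r ∧ toFun u = (r : ℂ)

/-- A gauge with constant `c`: `p : ℕ → (0,∞)` with `p(n+1)/p(n)` strongly almost
convergent to `c > 0`. -/
def IsGauge (p : ℕ → ℝ) (c : ℝ) : Prop :=
  (∀ n, 0 < p n) ∧ 0 < c ∧ AlmostConvergentR (fun n => |p (n + 1) / p n - c|) 0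

variable {H : Type*} [NormedAddCommGroup H] [InnerProductSpace ℂ H] [CompleteSpace H]

/-- Positivity of a matrix of operators `[A i j]` acting on `H ⊕ ⋯ ⊕ H`. -/
def MatrixIsPos {k : ℕ} (A : Matrix (Fin k) (Fin k) (H →L[ℂ] H)) : Prop :=
  ∀ x : Fin k → H, ∃ r : ℝ, 0 ≤ r ∧
    (∑ i, ∑ j, (inner ℂ (x i) (A i j (x j)) : ℂ)) = (r : ℂ)

/-- Ultraweak (σ-weak) continuity of a functional on `B(H)`:
`l(A) = ∑ ⟨A xᵢ, yᵢ⟩` with `∑ ‖xᵢ‖² < ∞`, `∑ ‖yᵢ‖² < ∞`. -/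
def UWContinuousFunctional (l : (H →L[ℂ] H) → ℂ) : Prop :=
  ∃ x y : ℕ → H, Summable (fun i => ‖x i‖ ^ 2) ∧ Summable (fun i => ‖y i‖ ^ 2) ∧
    ∀ A : H →L[ℂ] H, HasSum (fun i => (inner ℂ (y i) (A (x i)) : ℂ)) (l A)

/-- `τ` is a faithful normal trace on the von Neumann algebra `M`. -/
def IsFiniteTrace (M : VonNeumannAlgebra H) (τ : (H →L[ℂ] H) →ₗ[ℂ] ℂ) : Prop :=
  (∀ A ∈ M, ∀ B ∈ M, τ (A * B) = τ (B * A)) ∧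
  (∀ A ∈ M, A.IsPositive → ∃ r : ℝ, 0 ≤ r ∧ τ A = (r : ℂ)) ∧
  (∀ A ∈ M, A.IsPositive → τ A = 0 → A = 0) ∧
  UWContinuousFunctional (fun A => τ A)

/-!
With `Vₙ = p(n)⁻¹ Tⁿ`, which domination makes uniformly bounded, `⟨y, E X x⟩` is the Banach
limit of `⟨Vₙ y, X Vₙ x⟩`: `E` is a Banach limit of the compressions `X ↦ Vₙ* X Vₙ`. Each
compression is linear, bounded by `sup ‖Vₙ‖²`, completely positive, and commutes with `M'` on
`M` because `Vₙ ∈ M`. These properties survive the Banach limit since `L` is linear, contractive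
and positive on bounded sequences, and `E X ∈ M'' = M` by the double commutant theorem.
-/

open scoped InnerProductSpace

lemma IsBoundedSeq.sum {ι : Type*} {s : Finset ι} {f : ι → ℕ → ℂ}
    (hf : ∀ i ∈ s, IsBoundedSeq (f i)) : IsBoundedSeq fun n => ∑ i ∈ s, f i n := by
  choose! C hC using hf
  exact ⟨∑ i ∈ s, C i, fun n =>
    (norm_sum_le _ _).trans (Finset.sum_le_sum fun i hi => hC i hi n)⟩

namespace BanachLimit

lemma map_zero (L : BanachLimit) : L.toFun 0 = 0 := by
  simpa using L.map_smul' 0 0 ⟨0, fun n => by simp⟩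

lemma map_sum (L : BanachLimit) {ι : Type*} (s : Finset ι) {f : ι → ℕ → ℂ}
    (hf : ∀ i ∈ s, IsBoundedSeq (f i)) :
    L.toFun (fun n => ∑ i ∈ s, f i n) = ∑ i ∈ s, L.toFun (f i) := by
  classical
  induction s using Finset.induction_on with
  | empty =>
    simp only [Finset.sum_empty]
    exact L.map_zero
  | insert a s ha ih =>
    rw [Finset.forall_mem_insert] at hf
    rw [Finset.sum_insert ha, ← ih hf.2, ← L.map_add' _ _ hf.1 (IsBoundedSeq.sum hf.2)]
    congr 1
    funext n
    simp [Finset.sum_insert ha]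

end BanachLimit

section

variable {H : Type*} [NormedAddCommGroup H] [InnerProductSpace ℂ H]

namespace ContinuousLinearMap

lemma norm_inner_apply_comp_le (S X : H →L[ℂ] H) (x y : H) :
    ‖⟪S y, X (S x)⟫_ℂ‖ ≤ ‖S‖ ^ 2 * ‖X‖ * ‖x‖ * ‖y‖ :=
  calc ‖⟪S y, X (S x)⟫_ℂ‖ ≤ ‖S y‖ * (‖X‖ * ‖S x‖) :=
        (norm_inner_le_norm _ _).trans (by gcongr; exact X.le_opNorm _)
    _ ≤ (‖S‖ * ‖y‖) * (‖X‖ * (‖S‖ * ‖x‖)) := by gcongr <;> exact S.le_opNorm _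
    _ = ‖S‖ ^ 2 * ‖X‖ * ‖x‖ * ‖y‖ := by ring

lemma norm_inv_smul_pow_le {T : H →L[ℂ] H} {p : ℕ → ℝ} (hp : ∀ n, 0 < p n)
    (hdom : ∀ n : ℕ, 1 ≤ n → ‖T ^ n‖ ≤ p n) (n : ℕ) :
    ‖(p n : ℂ)⁻¹ • T ^ n‖ ≤ max 1 (p 0)⁻¹ := by
  rw [norm_smul, norm_inv, Complex.norm_real, Real.norm_of_nonneg (hp n).le]
  rcases n with _ | n
  · refine le_max_of_le_right (mul_le_of_le_one_right (inv_nonneg.2 (hp 0).le) ?_)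
    rw [pow_zero]
    exact norm_id_le
  · exact le_max_of_le_left (inv_mul_le_one_of_le₀ (hdom _ n.succ_pos) (hp _).le)

end ContinuousLinearMap

def IsBanachLimitCompression (L : BanachLimit) (V : ℕ → H →L[ℂ] H)
    (E : (H →L[ℂ] H) → (H →L[ℂ] H)) : Prop :=
  ∀ X x y, ⟪y, E X x⟫_ℂ = L.toFun fun n => ⟪V n y, X (V n x)⟫_ℂ

variable {L : BanachLimit} {V : ℕ → H →L[ℂ] H} {C : ℝ} {E : (H →L[ℂ] H) → (H →L[ℂ] H)}

lemma isBoundedSeq_inner_apply_comp (hV : ∀ n, ‖V n‖ ≤ C) (X : H →L[ℂ] H) (x y : H) :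
    IsBoundedSeq fun n => ⟪V n y, X (V n x)⟫_ℂ :=
  ⟨C ^ 2 * ‖X‖ * ‖x‖ * ‖y‖, fun n =>
    (ContinuousLinearMap.norm_inner_apply_comp_le _ _ _ _).trans (by gcongr; exact hV n)⟩

lemma IsBanachLimitCompression.isLinearMap (hE : IsBanachLimitCompression L V E)
    (hV : ∀ n, ‖V n‖ ≤ C) :
    IsLinearMap ℂ E where
  map_add X Y := by
    ext x
    refine ext_inner_left ℂ fun y => ?_
    rw [add_apply, inner_add_right, hE, hE, hE, ← L.map_add' _ _
      (isBoundedSeq_inner_apply_comp hV X x y) (isBoundedSeq_inner_apply_comp hV Y x y)]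
    simp only [add_apply, inner_add_right, Pi.add_def]
  map_smul a X := by
    ext x
    refine ext_inner_left ℂ fun y => ?_
    rw [smul_apply, inner_smul_right, hE, hE,
      ← L.map_smul' a _ (isBoundedSeq_inner_apply_comp hV X x y)]
    simp only [smul_apply, inner_smul_right, Pi.smul_def, smul_eq_mul]

lemma IsBanachLimitCompression.norm_le (hE : IsBanachLimitCompression L V E)
    (hV : ∀ n, ‖V n‖ ≤ C) (X : H →L[ℂ] H) :
    ‖E X‖ ≤ C ^ 2 * ‖X‖ := by
  refine ContinuousLinearMap.opNorm_le_bound _ (by positivity) fun x => ?_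
  have hsq : ‖E X x‖ ^ 2 ≤ C ^ 2 * ‖X‖ * ‖x‖ * ‖E X x‖ := by
    have h := L.norm_le' _ (C ^ 2 * ‖X‖ * ‖x‖ * ‖E X x‖) fun n =>
      ContinuousLinearMap.norm_inner_apply_comp_le (V n) X x (E X x) |>.trans
        (by gcongr; exact hV n)
    rwa [← hE, inner_self_eq_norm_sq_to_K, norm_pow, RCLike.norm_ofReal, abs_norm] at h
  have hbound : 0 ≤ C ^ 2 * ‖X‖ * ‖x‖ := by positivity
  nlinarith [norm_nonneg (E X x)]

lemma IsBanachLimitCompression.mem [CompleteSpace H] (hE : IsBanachLimitCompression L V E)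
    {M : VonNeumannAlgebra H} (hVM : ∀ n, V n ∈ M)
    {X : H →L[ℂ] H} (hX : X ∈ M) : E X ∈ M := by
  rw [← M.commutant_commutant, VonNeumannAlgebra.mem_commutant_iff]
  intro S hS
  have hcomm : ∀ A ∈ M, ∀ B ∈ M.commutant, ∀ v, A (B v) = B (A v) := fun A hA B hB v =>
    congr($(VonNeumannAlgebra.mem_commutant_iff.mp hB A hA) v)
  ext x
  refine ext_inner_left ℂ fun y => ?_
  rw [mul_apply_eq_comp, mul_apply_eq_comp,
    ← ContinuousLinearMap.adjoint_inner_left, hE, hE]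
  congr 1
  funext n
  rw [← ContinuousLinearMap.star_eq_adjoint, hcomm _ (hVM n) _ (star_mem hS),
    ContinuousLinearMap.star_eq_adjoint, ContinuousLinearMap.adjoint_inner_left,
    ← hcomm _ hX _ hS, ← hcomm _ (hVM n) _ hS]

lemma IsBanachLimitCompression.matrixIsPos_map (hE : IsBanachLimitCompression L V E)
    (hV : ∀ n, ‖V n‖ ≤ C)
    {k : ℕ} {A : Matrix (Fin k) (Fin k) (H →L[ℂ] H)} (hA : MatrixIsPos A) :
    MatrixIsPos (A.map E) := by
  intro x
  have hsum : (L.toFun fun n => ∑ i, ∑ j, ⟪V n (x i), A i j (V n (x j))⟫_ℂ) =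
      ∑ i, ∑ j, ⟪x i, E (A i j) (x j)⟫_ℂ := by
    refine (L.map_sum _ fun i _ => IsBoundedSeq.sum fun j _ =>
      isBoundedSeq_inner_apply_comp hV _ _ _).trans (Finset.sum_congr rfl fun i _ => ?_)
    refine (L.map_sum _ fun j _ => isBoundedSeq_inner_apply_comp hV _ _ _).trans ?_
    exact Finset.sum_congr rfl fun j _ => (hE _ _ _).symm
  simpa only [Matrix.map_apply, hsum] using L.pos' _ fun n => hA fun i => V n (x i)

end

theorem E_LT_completelyPositive_general
    {H : Type*} [NormedAddCommGroup H] [InnerProductSpace ℂ H] [CompleteSpace H]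
    (M : VonNeumannAlgebra H) (T : H →L[ℂ] H) (hT : T ∈ M)
    (p : ℕ → ℝ) (c : ℝ) (hp : IsGauge p c)
    (hdom : ∀ n : ℕ, 1 ≤ n → ‖T ^ n‖ ≤ p n)
    (L : BanachLimit)
    (E : (H →L[ℂ] H) → (H →L[ℂ] H))
    (hE : ∀ (X : H →L[ℂ] H) (x y : H),
      (inner ℂ y (E X x) : ℂ) =
        L.toFun (fun n => (inner ℂ ((T ^ n) y) (X ((T ^ n) x)) : ℂ) / ((p n : ℂ) ^ 2))) :
    IsLinearMap ℂ E ∧ (∃ C : ℝ, ∀ X : H →L[ℂ] H, ‖E X‖ ≤ C * ‖X‖) ∧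
      (∀ X ∈ M, E X ∈ M) ∧
      ∀ (k : ℕ) (A : Matrix (Fin k) (Fin k) (H →L[ℂ] H)),
        (∀ i j, A i j ∈ M) → MatrixIsPos A → MatrixIsPos (A.map E) := by
  obtain ⟨hp_pos, -, -⟩ := hp
  set V : ℕ → H →L[ℂ] H := fun n => (p n : ℂ)⁻¹ • T ^ n
  have hV : ∀ n, ‖V n‖ ≤ max 1 (p 0)⁻¹ := ContinuousLinearMap.norm_inv_smul_pow_le hp_pos hdom
  have hVM : ∀ n, V n ∈ M := fun n => M.smul_mem (pow_mem hT n) _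
  have hEV : IsBanachLimitCompression L V E := by
    intro X x y
    rw [hE]
    congr 1
    funext n
    have hpn : (p n : ℂ) ≠ 0 := Complex.ofReal_ne_zero.2 (hp_pos n).ne'
    simp only [V, smul_apply, map_smul, inner_smul_left, inner_smul_right, map_inv₀,
      Complex.conj_ofReal]
    field_simp
  exact ⟨hEV.isLinearMap hV, ⟨_, hEV.norm_le hV⟩, fun X hX => hEV.mem hVM hX,
    fun k A _ hA => hEV.matrixIsPos_map hV hA⟩

/-- `E_{L,T}`, defined by `⟨E_{L,T}(X)x, y⟩ = L({⟨X Tⁿx, Tⁿy⟩/p(n)²})`, is a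
completely positive bounded linear map on `M`. -/
theorem E_LT_completelyPositive
    {H : Type*} [NormedAddCommGroup H] [InnerProductSpace ℂ H] [CompleteSpace H]
    [TopologicalSpace.SeparableSpace H]
    (M : VonNeumannAlgebra H) (T : H →L[ℂ] H) (hT : T ∈ M)
    (p : ℕ → ℝ) (c : ℝ) (hp : IsGauge p c)
    (hdom : ∀ n : ℕ, 1 ≤ n → ‖T ^ n‖ ≤ p n)
    (L : BanachLimit)
    (E : (H →L[ℂ] H) → (H →L[ℂ] H))
    (hE : ∀ (X : H →L[ℂ] H) (x y : H),
      (inner ℂ y (E X x) : ℂ) =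
        L.toFun (fun n => (inner ℂ ((T ^ n) y) (X ((T ^ n) x)) : ℂ) / ((p n : ℂ) ^ 2))) :
    IsLinearMap ℂ E ∧ (∃ C : ℝ, ∀ X : H →L[ℂ] H, ‖E X‖ ≤ C * ‖X‖) ∧
      (∀ X ∈ M, E X ∈ M) ∧
      ∀ (k : ℕ) (A : Matrix (Fin k) (Fin k) (H →L[ℂ] H)),
        (∀ i j, A i j ∈ M) → MatrixIsPos A → MatrixIsPos (A.map E) :=
  E_LT_completelyPositive_general M T hT p c hp hdom L E hE
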